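/- (Proposition 3, part 1) Assume α₁ = α₂ = 1/2, J₁₁ = J₂₂ > 0, J₁₂ < 0, h₁ = h₂ = 0, and set λ_M = J₁₁ − J₁₂ and t = 2/(βλ_M). For even N let N₁ = N₂ = N/2 and let p_N = (1/N)·log Z_N be the pressure. Then: if t ≥ 1, the limit of p_N over even N → ∞ equals log 2 (i.e., log 2 + f(0,0)); if t < 1, the limit equals log 2 + f(x̃,−x̃), where x̃ is the unique solution in (0,1) of x = tanh((βλ_M/2)·x). -/

import Mathlib

open Finset Filter

/-- The entropy function 𝓘(x) = ((1+x)log(1+x) + (1-x)log(1-x))/2.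
Note `Real.log 0 = 0` in Mathlib, which implements the convention 0·log 0 = 0. -/
noncomputable def entI (x : ℝ) : ℝ :=
  ((1 + x) * Real.log (1 + x) + (1 - x) * Real.log (1 - x)) / 2

/-- Pressure functional of the symmetric zero-field bipartite mean-field model. -/
noncomputable def fSym (β J11 J12 : ℝ) (μ : ℝ × ℝ) : ℝ :=
  β / 8 * (J11 * (μ.1 ^ 2 + μ.2 ^ 2) + 2 * J12 * μ.1 * μ.2) - (entI μ.1 + entI μ.2) / 2

/-- The value of a spin encoded by a Boolean. -/
noncomputable def spin (b : Bool) : ℝ := if b then 1 else -1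

/-- The Hamiltonian density g(μ₁,μ₂) = (1/8)(J₁₁(μ₁² + μ₂²) + 2J₁₂μ₁μ₂) of the
symmetric zero-field model. -/
noncomputable def gSym (J11 J12 μ1 μ2 : ℝ) : ℝ :=
  (1 / 8) * (J11 * (μ1 ^ 2 + μ2 ^ 2) + 2 * J12 * μ1 * μ2)

/-- Magnetization of the first block (the first n spins out of n + n). -/
noncomputable def mag1 (n : ℕ) (σ : Fin (n + n) → Bool) : ℝ :=
  (1 / (n : ℝ)) * ∑ i : Fin (n + n), if (i : ℕ) < n then spin (σ i) else 0

/-- Magnetization of the second block (the last n spins out of n + n). -/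
noncomputable def mag2 (n : ℕ) (σ : Fin (n + n) → Bool) : ℝ :=
  (1 / (n : ℝ)) * ∑ i : Fin (n + n), if n ≤ (i : ℕ) then spin (σ i) else 0

/-- The partition function of the symmetric zero-field model with N = n + n spins. -/
noncomputable def ZSym (β J11 J12 : ℝ) (n : ℕ) : ℝ :=
  ∑ σ : Fin (n + n) → Bool,
    Real.exp (β * ((n : ℝ) + n) * gSym J11 J12 (mag1 n σ) (mag2 n σ))

/-!
Grouping configurations by their block magnetizations writes `Z_N` as a sum of `(n + 1)²` terms
`C(n, k₁) C(n, k₂) exp(β N g(μ₁, μ₂))`, and `C(n, k) = exp(n (log 2 − 𝓘(μ)) + O(log n))` because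
the `k`-th term of `(k + (n − k))ⁿ` is its largest. Hence `p_N` is within `O(log n / n)` of
`log 2 + f` at the best grid point, and `p_N → log 2 + max f` over the square.

Since `J₁₂ < 0`, `f(x, y) ≤ (ψ(x) + ψ(y)) / 2` with equality on the antidiagonal, where
`ψ(x) = f(x, −x) = (β λ_M / 4) x² − 𝓘(x)`. If `t ≥ 1` then `ψ ≤ 0 = ψ(0)` because `𝓘(x) ≥ x² / 2`.
If `t < 1` then `ψ` is positive near `0` and increases away from `1` (where `𝓘` has infinite slope),
so it attains its maximum at a critical point in `(0, 1)`, i.e. at a solution of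
`x = tanh((β λ_M / 2) x)`, which is `x̃`.
-/

open Real

lemma entI_neg (x : ℝ) : entI (-x) = entI x := by
  unfold entI; ring_nf

@[simp] lemma entI_zero : entI 0 = 0 := by simp [entI]

lemma entI_one : entI 1 = log 2 := by norm_num [entI]

@[fun_prop] lemma continuous_entI : Continuous entI := by
  unfold entI
  have := continuous_mul_log
  fun_prop

lemma hasDerivAt_entI {x : ℝ} (hx : x ∈ Set.Ioo (-1) 1) : HasDerivAt entI (artanh x) x := by
  obtain ⟨h1, h2⟩ := hx
  have hp : 1 + x ≠ 0 := by linarith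
  have hm : 1 - x ≠ 0 := by linarith
  have d1 := (hasDerivAt_id x).const_add 1
  have d2 := (hasDerivAt_id x).const_sub 1
  refine (((d1.mul (d1.log hp)).add (d2.mul (d2.log hm))).div_const 2).congr_deriv ?_
  rw [artanh_eq_half_log ⟨h1.le, h2.le⟩, log_div hp hm, id]
  field_simp
  ring

lemma self_le_artanh {x : ℝ} (h0 : 0 ≤ x) (h1 : x < 1) : x ≤ artanh x := by
  have hseries := hasSum_log_sub_log_of_abs_lt_one (abs_lt.2 ⟨by linarith, h1⟩)
  have := le_hasSum hseries 0 fun k _ => by positivity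
  rw [artanh_eq_half_log ⟨by linarith, h1.le⟩, log_div (by linarith) (by linarith)]
  simp at this
  linarith

lemma sq_div_two_le_entI {x : ℝ} (hx : x ∈ Set.Icc (-1) 1) : x ^ 2 / 2 ≤ entI x := by
  suffices key : ∀ y ∈ Set.Icc (0 : ℝ) 1, y ^ 2 / 2 ≤ entI y by
    rcases le_total 0 x with h | h
    · exact key x ⟨h, hx.2⟩
    · simpa [entI_neg] using key (-x) ⟨by linarith, by linarith [hx.1]⟩
  have hmono : MonotoneOn (fun y => entI y - y ^ 2 / 2) (Set.Icc 0 1) := by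
    refine monotoneOn_of_hasDerivWithinAt_nonneg (f' := fun y => artanh y - y)
      (convex_Icc 0 1) (by fun_prop) (fun y hy => ?_) (fun y hy => ?_)
    all_goals rw [interior_Icc] at hy
    · have := (hasDerivAt_entI ⟨by linarith [hy.1], hy.2⟩).sub
        ((hasDerivAt_pow 2 y).div_const 2)
      exact (this.congr_deriv (by norm_num)).hasDerivWithinAt
    · linarith [self_le_artanh hy.1.le hy.2]
  intro y hy
  simpa using hmono ⟨le_rfl, zero_le_one⟩ hy hy.1

lemma entI_le {x : ℝ} (h0 : 0 ≤ x) (h1 : x < 1) :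
    entI x ≤ x ^ 2 * (1 + x) / (2 * (1 - x)) := by
  -- `2 𝓘(x) = x log ((1 + x) / (1 - x)) + log (1 - x²)`; bound both logarithms by `log y ≤ y - 1`.
  have hp : 0 < 1 + x := by linarith
  have hm : 0 < 1 - x := by linarith
  have hratio := log_le_sub_one_of_pos (div_pos hp hm)
  have hprod := log_le_sub_one_of_pos (mul_pos hp hm)
  rw [log_div hp.ne' hm.ne'] at hratio
  rw [log_mul hp.ne' hm.ne'] at hprod
  have hx : x * (log (1 + x) - log (1 - x)) ≤ x * ((1 + x) / (1 - x) - 1) :=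
    mul_le_mul_of_nonneg_left hratio h0
  rw [le_div_iff₀ (by positivity)]
  field_simp at hx
  unfold entI
  nlinarith

lemma log_two_sub_entI_one_sub {ε : ℝ} (h0 : 0 < ε) (h1 : ε < 1) :
    -(ε / 2) * log ε ≤ log 2 - entI (1 - ε) := by
  have hlog : (2 - ε) * log (2 - ε) ≤ 2 * log 2 := by
    have := log_le_log (by linarith) (by linarith : 2 - ε ≤ 2)
    nlinarith [log_nonneg (by linarith : (1 : ℝ) ≤ 2 - ε)]
  unfold entI
  ring_nf at hlog ⊢
  linarith

noncomputable def cwPressure (c x : ℝ) : ℝ := c * x ^ 2 - entI x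

lemma cwPressure_neg (c x : ℝ) : cwPressure c (-x) = cwPressure c x := by
  simp [cwPressure, entI_neg]

lemma cwPressure_zero (c : ℝ) : cwPressure c 0 = 0 := by simp [cwPressure]

lemma continuous_cwPressure (c : ℝ) : Continuous (cwPressure c) := by
  unfold cwPressure; fun_prop

lemma hasDerivAt_cwPressure (c : ℝ) {x : ℝ} (hx : x ∈ Set.Ioo (-1) 1) :
    HasDerivAt (cwPressure c) (2 * c * x - artanh x) x :=
  (((hasDerivAt_pow 2 x).const_mul c).sub (hasDerivAt_entI hx)).congr_deriv (by ring)

lemma isMaxOn_cwPressure_zero {c : ℝ} (hc : c ≤ 1 / 2) :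
    IsMaxOn (cwPressure c) (Set.Icc (-1) 1) 0 := isMaxOn_iff.2 fun x hx => by
  have := sq_div_two_le_entI hx
  have := mul_le_mul_of_nonneg_right hc (sq_nonneg x)
  rw [cwPressure_zero, cwPressure]
  linarith

lemma exists_cwPressure_pos {c : ℝ} (hc : 1 / 2 < c) :
    ∃ x ∈ Set.Icc (0 : ℝ) 1, 0 < cwPressure c x := by
  -- `x` is chosen so that `(1 + x) / (1 - x) < 2 c`, which makes `entI_le` beat `c x²`.
  set x := (2 * c - 1) / (4 * c + 2)
  have hx0 : 0 < x := div_pos (by linarith) (by linarith)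
  have hx1 : x < 1 / 2 := by rw [div_lt_iff₀ (by linarith)]; linarith
  have hratio : 1 + x < 2 * c * (1 - x) := by
    simp only [x]
    field_simp
    nlinarith
  refine ⟨x, ⟨hx0.le, by linarith⟩, ?_⟩
  have hent : x ^ 2 * (1 + x) / (2 * (1 - x)) < c * x ^ 2 := by
    rw [div_lt_iff₀ (by linarith)]
    nlinarith [pow_pos hx0 2]
  linarith [entI_le hx0.le (by linarith), show cwPressure c x = c * x ^ 2 - entI x from rfl]

lemma exists_cwPressure_gt_one {c : ℝ} (hc : 0 ≤ c) :
    ∃ x ∈ Set.Icc (0 : ℝ) 1, cwPressure c 1 < cwPressure c x := by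
  -- Near `1`, `𝓘` has slope `-log ε / 2`, beating the slope `2 c` of `c x²` once `log ε < -4 c`.
  set ε := exp (-(4 * c + 1))
  have hε0 : 0 < ε := exp_pos _
  have hε1 : ε < 1 := exp_lt_one_iff.2 (by linarith)
  refine ⟨1 - ε, ⟨by linarith, by linarith⟩, ?_⟩
  have hgain := log_two_sub_entI_one_sub hε0 hε1
  rw [log_exp] at hgain
  unfold cwPressure
  rw [entI_one]
  nlinarith [mul_pos hε0 hε0]

lemma eq_tanh_of_isLocalMax {c x : ℝ} (hx : x ∈ Set.Ioo (-1) 1)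
    (hmax : IsLocalMax (cwPressure c) x) : x = tanh (2 * c * x) := by
  have hcrit := hmax.hasDerivAt_eq_zero (hasDerivAt_cwPressure c hx)
  rw [show 2 * c * x = artanh x by linarith, tanh_artanh hx]

lemma isMaxOn_cwPressure_of_Icc_zero {c x : ℝ} (hmax : IsMaxOn (cwPressure c) (Set.Icc 0 1) x) :
    IsMaxOn (cwPressure c) (Set.Icc (-1) 1) x := isMaxOn_iff.2 fun y hy => by
  rcases le_total 0 y with h | h
  · exact isMaxOn_iff.1 hmax y ⟨h, hy.2⟩
  · rw [← cwPressure_neg]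
    exact isMaxOn_iff.1 hmax (-y) ⟨by linarith, by linarith [hy.1]⟩

lemma exists_isMaxOn_cwPressure {c : ℝ} (hc : 1 / 2 < c) :
    ∃ x ∈ Set.Ioo (0 : ℝ) 1,
      IsMaxOn (cwPressure c) (Set.Icc (-1) 1) x ∧ x = tanh (2 * c * x) := by
  obtain ⟨x, hx, hmax⟩ := isCompact_Icc.exists_isMaxOn (Set.nonempty_Icc.2 zero_le_one)
    (continuous_cwPressure c).continuousOn
  have hx0 : x ≠ 0 := by
    rintro rfl
    obtain ⟨y, hy, hpos⟩ := exists_cwPressure_pos hc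
    linarith [cwPressure_zero c ▸ isMaxOn_iff.1 hmax y hy]
  have hx1 : x ≠ 1 := by
    rintro rfl
    obtain ⟨y, hy, hlt⟩ := exists_cwPressure_gt_one (by linarith)
    linarith [isMaxOn_iff.1 hmax y hy]
  have hxIoo : x ∈ Set.Ioo 0 1 := ⟨hx.1.lt_of_ne' hx0, hx.2.lt_of_ne hx1⟩
  exact ⟨x, hxIoo, isMaxOn_cwPressure_of_Icc_zero hmax,
    eq_tanh_of_isLocalMax ⟨by linarith [hxIoo.1], hxIoo.2⟩
      (hmax.isLocalMax (Icc_mem_nhds hxIoo.1 hxIoo.2))⟩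

section Binomial

variable {n k : ℕ}

lemma binomial_term_succ_mul (j : ℕ) :
    k ^ (j + 1) * (n - k) ^ (n - (j + 1)) * n.choose (j + 1) * ((j + 1) * (n - k)) =
      k ^ j * (n - k) ^ (n - j) * n.choose j * ((n - j) * k) := by
  rcases lt_or_ge j n with hj | hj
  · have hexp : n - j = n - (j + 1) + 1 := by omega
    have hchoose := Nat.choose_succ_right_eq n j
    rw [hexp, pow_succ, pow_succ] at *
    calc _ = k ^ j * k * ((n - k) ^ (n - (j + 1)) * (n - k)) * (n.choose (j + 1) * (j + 1)) := by
          ring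
      _ = _ := by rw [hchoose]; ring
  · simp [Nat.choose_eq_zero_of_lt (Nat.lt_succ_of_le hj), Nat.sub_eq_zero_of_le hj]

lemma binomial_term_le_of_le (hk : k ≤ n) (j : ℕ) :
    k ^ j * (n - k) ^ (n - j) * n.choose j ≤ k ^ k * (n - k) ^ (n - k) * n.choose k := by
  set t : ℕ → ℕ := fun j => k ^ j * (n - k) ^ (n - j) * n.choose j
  rcases (n - k).eq_zero_or_pos with hnk | hnk
  · obtain rfl : k = n := by omega
    rcases lt_trichotomy j k with hj | rfl | hj
    · simp [zero_pow (Nat.sub_ne_zero_of_lt hj)]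
    · exact le_rfl
    · simp [Nat.choose_eq_zero_of_lt hj]
  have hratio (i : ℕ) : t (i + 1) * ((i + 1) * (n - k)) = t i * ((n - i) * k) :=
    binomial_term_succ_mul i
  have hup (i : ℕ) (hi : i < k) : t i ≤ t (i + 1) := by
    refine Nat.le_of_mul_le_mul_right ?_ (by positivity : 0 < (i + 1) * (n - k))
    rw [hratio]
    exact Nat.mul_le_mul_left _
      ((Nat.mul_le_mul hi (by omega : n - k ≤ n - i)).trans_eq (mul_comm _ _))
  have hdown (i : ℕ) (hi : k ≤ i) : t (i + 1) ≤ t i := by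
    refine Nat.le_of_mul_le_mul_right ?_ (by positivity : 0 < (i + 1) * (n - k))
    rw [hratio]
    exact Nat.mul_le_mul_left _
      ((Nat.mul_le_mul (by omega : n - i ≤ n - k) (by omega : k ≤ i + 1)).trans_eq (mul_comm _ _))
  rcases le_total j k with hj | hj
  · exact Nat.decreasingInduction (motive := fun i _ => t i ≤ t k)
      (fun i hi ih => (hup i hi).trans ih) le_rfl hj
  · exact antitoneOn_nat_Ici_of_succ_le hdown (le_refl k) hj hj

lemma binomial_term_le_pow (hk : k ≤ n) : k ^ k * (n - k) ^ (n - k) * n.choose k ≤ n ^ n := by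
  conv_rhs => rw [← Nat.add_sub_cancel' hk, add_pow, Nat.add_sub_cancel' hk]
  exact single_le_sum (f := fun j => k ^ j * (n - k) ^ (n - j) * n.choose j)
    (fun _ _ => Nat.zero_le _) (mem_range_succ_iff.2 hk)

lemma pow_le_succ_mul_binomial_term (hk : k ≤ n) :
    n ^ n ≤ (n + 1) * (k ^ k * (n - k) ^ (n - k) * n.choose k) := by
  conv_lhs => rw [← Nat.add_sub_cancel' hk, add_pow, Nat.add_sub_cancel' hk]
  simpa using sum_le_card_nsmul (range (n + 1)) _ _ fun j _ => binomial_term_le_of_le hk j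

end Binomial

noncomputable def gridPt (n k : ℕ) : ℝ := (2 * k - n) / n

lemma gridPt_mem_Icc {n k : ℕ} (hk : k ≤ n) : gridPt n k ∈ Set.Icc (-1) 1 := by
  rcases n.eq_zero_or_pos with rfl | hn
  · simp [gridPt]
  have hn' : (0 : ℝ) < n := by exact_mod_cast hn
  have hk' : (k : ℝ) ≤ n := by exact_mod_cast hk
  constructor
  · rw [gridPt, le_div_iff₀ hn']; linarith [k.cast_nonneg (α := ℝ)]
  · rw [gridPt, div_le_iff₀ hn']; linarith

lemma natCast_pow_self (k : ℕ) : (k : ℝ) ^ k = exp (k * log k) := by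
  rcases k.eq_zero_or_pos with rfl | hk
  · simp
  · rw [← log_pow, exp_log (by positivity)]

section Entropy

variable {n k : ℕ}

lemma exp_entropy_mul_binomial_weight (hn : 0 < n) (hk : k ≤ n) :
    exp (n * (log 2 - entI (gridPt n k))) * ((k : ℝ) ^ k * ((n - k : ℕ) : ℝ) ^ (n - k)) =
      (n : ℝ) ^ n := by
  have hn' : (0 : ℝ) < n := by exact_mod_cast hn
  have hsum : (k : ℝ) + ((n - k : ℕ) : ℝ) = n := by push_cast [Nat.cast_sub hk]; ring
  have hxlog (x : ℝ) : x * log (2 * x / n) = x * log 2 + x * log x - x * log n := by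
    rcases eq_or_ne x 0 with rfl | hx
    · simp
    · rw [log_div (by positivity) hn'.ne', log_mul two_ne_zero hx]; ring
  have hent : n * entI (gridPt n k) =
      k * log (2 * k / n) + ((n - k : ℕ) : ℝ) * log (2 * ((n - k : ℕ) : ℝ) / n) := by
    have h1 : 1 + gridPt n k = 2 * k / n := by rw [gridPt]; field_simp; ring
    have h2 : 1 - gridPt n k = 2 * ((n - k : ℕ) : ℝ) / n := by rw [gridPt]; field_simp; linarith
    rw [entI, h1, h2]
    field_simp
  rw [natCast_pow_self, natCast_pow_self, natCast_pow_self, ← exp_add, ← exp_add]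
  congr 1
  rw [mul_sub, hent, hxlog, hxlog, ← hsum]
  ring

lemma binomial_weight_pos : (0 : ℝ) < (k : ℝ) ^ k * ((n - k : ℕ) : ℝ) ^ (n - k) := by
  rw [natCast_pow_self, natCast_pow_self]; positivity

lemma choose_le_exp_entropy (hn : 0 < n) (hk : k ≤ n) :
    (n.choose k : ℝ) ≤ exp (n * (log 2 - entI (gridPt n k))) := by
  rw [← mul_le_mul_iff_left₀ binomial_weight_pos, exp_entropy_mul_binomial_weight hn hk]
  exact_mod_cast (mul_comm _ _).trans_le (binomial_term_le_pow hk)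

lemma exp_entropy_le_succ_mul_choose (hn : 0 < n) (hk : k ≤ n) :
    exp (n * (log 2 - entI (gridPt n k))) ≤ (n + 1) * n.choose k := by
  rw [← mul_le_mul_iff_left₀ binomial_weight_pos, exp_entropy_mul_binomial_weight hn hk]
  exact_mod_cast (pow_le_succ_mul_binomial_term hk).trans_eq (by ring)

end Entropy

noncomputable def spinMean {n : ℕ} (τ : Fin n → Bool) : ℝ := (1 / (n : ℝ)) * ∑ i, spin (τ i)

lemma spinMean_eq_gridPt {n : ℕ} (τ : Fin n → Bool) :
    spinMean τ = gridPt n #{i | τ i = true} := by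
  have hspin (b : Bool) : spin b = 2 * (if b = true then 1 else 0) - 1 := by
    cases b <;> norm_num [spin]
  simp only [spinMean, gridPt, hspin, sum_sub_distrib, ← mul_sum, sum_boole]
  simp [div_eq_inv_mul]

lemma sum_spinMean {M : Type*} [AddCommMonoid M] (n : ℕ) (F : ℝ → M) :
    ∑ τ : Fin n → Bool, F (spinMean τ) = ∑ k ∈ range (n + 1), n.choose k • F (gridPt n k) := by
  let e : (Fin n → Bool) ≃ Finset (Fin n) :=
    { toFun := fun τ => {i | τ i = true}
      invFun := fun s i => i ∈ s
      left_inv := fun τ => by ext; simp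
      right_inv := fun s => by ext; simp }
  rw [Fintype.sum_equiv e _ (fun s => F (gridPt n #s)) fun τ => by rw [spinMean_eq_gridPt]; rfl,
    ← powerset_univ, sum_powerset_apply_card (fun m => F (gridPt n m)), card_univ,
    Fintype.card_fin]

lemma mag1_append {n : ℕ} (a b : Fin n → Bool) : mag1 n (Fin.append a b) = spinMean a := by
  simp [mag1, spinMean, Fin.sum_univ_add]

lemma mag2_append {n : ℕ} (a b : Fin n → Bool) : mag2 n (Fin.append a b) = spinMean b := by
  simp only [mag2, spinMean, Fin.sum_univ_add, Fin.append_left, Fin.append_right,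
    Fin.val_castAdd, Fin.val_natAdd]
  simp [not_le.2 (Fin.is_lt _)]

noncomputable def gridWeight (β J11 J12 : ℝ) (n k1 k2 : ℕ) : ℝ :=
  n.choose k1 * n.choose k2 * exp (β * (n + n) * gSym J11 J12 (gridPt n k1) (gridPt n k2))

lemma ZSym_eq_sum_gridWeight (β J11 J12 : ℝ) (n : ℕ) :
    ZSym β J11 J12 n =
      ∑ k1 ∈ range (n + 1), ∑ k2 ∈ range (n + 1), gridWeight β J11 J12 n k1 k2 := by
  rw [ZSym, ← (Fin.appendEquiv n n).sum_comp, Fintype.sum_prod_type]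
  simp only [Fin.appendEquiv, Equiv.coe_fn_mk, mag1_append, mag2_append]
  refine (sum_spinMean n fun x => ∑ b : Fin n → Bool,
    exp (β * (n + n) * gSym J11 J12 x (spinMean b))).trans (sum_congr rfl fun k1 _ => ?_)
  rw [sum_spinMean n fun y => exp (β * (n + n) * gSym J11 J12 (gridPt n k1) y), smul_sum]
  refine sum_congr rfl fun k2 _ => ?_
  simp only [gridWeight, nsmul_eq_mul]
  ring

lemma ZSym_pos (β J11 J12 : ℝ) (n : ℕ) : 0 < ZSym β J11 J12 n :=
  sum_pos (fun _ _ => exp_pos _) univ_nonempty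

section GridBounds

variable {β J11 J12 : ℝ} {n k1 k2 : ℕ}

lemma exp_pressure_eq :
    exp (2 * n * (log 2 + fSym β J11 J12 (gridPt n k1, gridPt n k2))) =
      exp (n * (log 2 - entI (gridPt n k1))) * exp (n * (log 2 - entI (gridPt n k2))) *
        exp (β * (n + n) * gSym J11 J12 (gridPt n k1) (gridPt n k2)) := by
  rw [← exp_add, ← exp_add]
  unfold fSym gSym
  ring_nf

lemma gridWeight_le_exp_pressure (hn : 0 < n) (hk1 : k1 ≤ n) (hk2 : k2 ≤ n) :
    gridWeight β J11 J12 n k1 k2 ≤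
      exp (2 * n * (log 2 + fSym β J11 J12 (gridPt n k1, gridPt n k2))) := by
  rw [gridWeight, exp_pressure_eq]
  gcongr
  · exact choose_le_exp_entropy hn hk1
  · exact choose_le_exp_entropy hn hk2

lemma exp_pressure_le_gridWeight (hn : 0 < n) (hk1 : k1 ≤ n) (hk2 : k2 ≤ n) :
    exp (2 * n * (log 2 + fSym β J11 J12 (gridPt n k1, gridPt n k2))) ≤
      (n + 1) ^ 2 * gridWeight β J11 J12 n k1 k2 := by
  rw [gridWeight, exp_pressure_eq]
  calc _ ≤ ((n + 1) * n.choose k1) * ((n + 1) * n.choose k2) *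
        exp (β * (n + n) * gSym J11 J12 (gridPt n k1) (gridPt n k2)) := by
        gcongr
        · exact exp_entropy_le_succ_mul_choose hn hk1
        · exact exp_entropy_le_succ_mul_choose hn hk2
    _ = _ := by ring

lemma log_ZSym_le (hn : 0 < n) {M : ℝ}
    (hM : ∀ k1 ≤ n, ∀ k2 ≤ n, fSym β J11 J12 (gridPt n k1, gridPt n k2) ≤ M) :
    log (ZSym β J11 J12 n) ≤ 2 * n * (log 2 + M) + 2 * log (n + 1) := by
  have hZ : ZSym β J11 J12 n ≤ (n + 1) ^ 2 * exp (2 * n * (log 2 + M)) := by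
    rw [ZSym_eq_sum_gridWeight]
    calc _ ≤ ∑ k1 ∈ range (n + 1), ∑ k2 ∈ range (n + 1), exp (2 * n * (log 2 + M)) := by
          refine sum_le_sum fun k1 hk1 => sum_le_sum fun k2 hk2 => ?_
          rw [mem_range_succ_iff] at hk1 hk2
          exact (gridWeight_le_exp_pressure hn hk1 hk2).trans
            (exp_le_exp.2 (by gcongr; exact hM k1 hk1 k2 hk2))
      _ = _ := by simp only [sum_const, card_range, nsmul_eq_mul]; push_cast; ring
  calc _ ≤ log ((n + 1) ^ 2 * exp (2 * n * (log 2 + M))) := log_le_log (ZSym_pos _ _ _ _) hZ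
    _ = _ := by rw [log_mul (by positivity) (exp_pos _).ne', log_exp, log_pow]; push_cast; ring

lemma gridWeight_le_ZSym (hk1 : k1 ≤ n) (hk2 : k2 ≤ n) :
    gridWeight β J11 J12 n k1 k2 ≤ ZSym β J11 J12 n := by
  have hnonneg (k1 k2 : ℕ) : 0 ≤ gridWeight β J11 J12 n k1 k2 := by
    unfold gridWeight; positivity
  rw [ZSym_eq_sum_gridWeight]
  exact (single_le_sum (fun k2 _ => hnonneg k1 k2) (mem_range_succ_iff.2 hk2)).trans
    (single_le_sum (f := fun k1 => ∑ k2 ∈ range (n + 1), gridWeight β J11 J12 n k1 k2)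
      (fun k1 _ => sum_nonneg fun k2 _ => hnonneg k1 k2) (mem_range_succ_iff.2 hk1))

lemma le_log_ZSym (hn : 0 < n) (hk1 : k1 ≤ n) (hk2 : k2 ≤ n) :
    2 * n * (log 2 + fSym β J11 J12 (gridPt n k1, gridPt n k2)) - 2 * log (n + 1) ≤
      log (ZSym β J11 J12 n) := by
  have hZ := ZSym_pos β J11 J12 n
  have hexp := (exp_pressure_le_gridWeight (β := β) (J11 := J11) (J12 := J12) hn hk1 hk2).trans
    (mul_le_mul_of_nonneg_left (gridWeight_le_ZSym hk1 hk2) (by positivity))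
  rw [← le_log_iff_exp_le (by positivity), log_mul (by positivity) hZ.ne', log_pow] at hexp
  push_cast at hexp
  linarith

end GridBounds

lemma tendsto_gridPt_floor {x : ℝ} (hx : -1 ≤ x) :
    Tendsto (fun n : ℕ => gridPt n ⌊n * (1 + x) / 2⌋₊) atTop (nhds x) := by
  have hlow : Tendsto (fun n : ℕ => x - 2 / (n : ℝ)) atTop (nhds x) := by
    simpa using tendsto_const_nhds.sub (tendsto_const_div_atTop_nhds_zero_nat (2 : ℝ))
  refine tendsto_of_tendsto_of_tendsto_of_le_of_le' hlow tendsto_const_nhds ?_ ?_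
  all_goals filter_upwards [eventually_gt_atTop 0] with n hn
  all_goals have hn' : (0 : ℝ) < n := by exact_mod_cast hn
  · have := Nat.lt_floor_add_one (n * (1 + x) / 2)
    rw [gridPt, le_div_iff₀ hn', sub_mul, div_mul_cancel₀ _ hn'.ne']
    linarith
  · have := Nat.floor_le (by nlinarith : (0 : ℝ) ≤ n * (1 + x) / 2)
    rw [gridPt, div_le_iff₀ hn']
    linarith

lemma floor_mul_one_add_div_two_le {x : ℝ} (hx : x ≤ 1) (n : ℕ) : ⌊n * (1 + x) / 2⌋₊ ≤ n :=
  Nat.floor_le_of_le (by nlinarith [n.cast_nonneg (α := ℝ)])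

lemma tendsto_log_succ_div : Tendsto (fun n : ℕ => log (n + 1) / n) atTop (nhds 0) := by
  refine ((tendsto_pow_log_div_mul_add_atTop 1 (-1) 1 one_ne_zero).comp
    (tendsto_atTop_add_const_right atTop (1 : ℝ) tendsto_natCast_atTop_atTop)).congr fun n => ?_
  simp

lemma continuous_fSym (β J11 J12 : ℝ) : Continuous (fSym β J11 J12) := by
  unfold fSym; fun_prop

theorem tendsto_pressure_of_isMaxOn {β J11 J12 : ℝ} {p : ℝ × ℝ}
    (hp : p ∈ Set.Icc (-1) 1 ×ˢ Set.Icc (-1) 1)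
    (hmax : IsMaxOn (fSym β J11 J12) (Set.Icc (-1) 1 ×ˢ Set.Icc (-1) 1) p) :
    Tendsto (fun n : ℕ => (1 / ((n + n : ℕ) : ℝ)) * log (ZSym β J11 J12 n))
      atTop (nhds (log 2 + fSym β J11 J12 p)) := by
  set k : ℝ → ℕ → ℕ := fun x n => ⌊n * (1 + x) / 2⌋₊
  have hf : Tendsto (fun n : ℕ => fSym β J11 J12 (gridPt n (k p.1 n), gridPt n (k p.2 n)))
      atTop (nhds (fSym β J11 J12 p)) :=
    ((continuous_fSym β J11 J12).tendsto p).comp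
      ((tendsto_gridPt_floor hp.1.1).prodMk_nhds (tendsto_gridPt_floor hp.2.1))
  have hlow := ((tendsto_const_nhds (x := log 2)).add hf).sub tendsto_log_succ_div
  have hup := (tendsto_const_nhds (x := log 2 + fSym β J11 J12 p)).add tendsto_log_succ_div
  rw [sub_zero] at hlow
  rw [add_zero] at hup
  refine tendsto_of_tendsto_of_tendsto_of_le_of_le' hlow hup ?_ ?_
  all_goals filter_upwards [eventually_gt_atTop 0] with n hn
  all_goals have hn' : (0 : ℝ) < n := by exact_mod_cast hn
  all_goals rw [Nat.cast_add, ← two_mul, one_div_mul_eq_div]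
  · have := le_log_ZSym (β := β) (J11 := J11) (J12 := J12) hn
      (floor_mul_one_add_div_two_le hp.1.2 n) (floor_mul_one_add_div_two_le hp.2.2 n)
    rw [le_div_iff₀ (by positivity)]
    field_simp
    linarith
  · have := log_ZSym_le hn fun k1 hk1 k2 hk2 =>
      isMaxOn_iff.1 hmax _ ⟨gridPt_mem_Icc hk1, gridPt_mem_Icc hk2⟩
    rw [div_le_iff₀ (by positivity)]
    field_simp
    linarith

lemma fSym_apply_neg (β J11 J12 x : ℝ) :
    fSym β J11 J12 (x, -x) = cwPressure (β * (J11 - J12) / 4) x := by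
  simp only [fSym, cwPressure, entI_neg]; ring

lemma fSym_le_cwPressure_add {β J12 : ℝ} (hβ : 0 ≤ β) (hJ12 : J12 ≤ 0) (J11 x y : ℝ) :
    fSym β J11 J12 (x, y) ≤
      (cwPressure (β * (J11 - J12) / 4) x + cwPressure (β * (J11 - J12) / 4) y) / 2 := by
  have : β * J12 * (x + y) ^ 2 ≤ 0 :=
    mul_nonpos_of_nonpos_of_nonneg (mul_nonpos_of_nonneg_of_nonpos hβ hJ12) (sq_nonneg _)
  simp only [fSym, cwPressure]
  linarith

lemma isMaxOn_fSym_of_isMaxOn_cwPressure {β J11 J12 x : ℝ} (hβ : 0 ≤ β) (hJ12 : J12 ≤ 0)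
    (hmax : IsMaxOn (cwPressure (β * (J11 - J12) / 4)) (Set.Icc (-1) 1) x) :
    IsMaxOn (fSym β J11 J12) (Set.Icc (-1) 1 ×ˢ Set.Icc (-1) 1) (x, -x) :=
  isMaxOn_iff.2 fun p hp => by
    have h1 := isMaxOn_iff.1 hmax p.1 hp.1
    have h2 := isMaxOn_iff.1 hmax p.2 hp.2
    have := fSym_le_cwPressure_add hβ hJ12 J11 p.1 p.2
    rw [fSym_apply_neg]
    linarith

/-- Proposition 3, part 1: with λ_M = J₁₁ − J₁₂ and t = 2/(βλ_M), the pressure of the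
symmetric model with J₁₁ = J₂₂ > 0, J₁₂ < 0, h = 0 converges, along even N = n + n, to
log 2 (= log 2 + f(0,0)) if t ≥ 1, and to log 2 + f(x̃,−x̃) if t < 1, where x̃ is the
unique solution in (0,1) of x = tanh((βλ_M/2)x). -/
theorem prop3_part1 (β J11 J12 : ℝ) (hJ11 : 0 < J11) (hJ12 : J12 < 0) (hβ : 0 < β) :
    (1 ≤ 2 / (β * (J11 - J12)) →
      Tendsto (fun n : ℕ => (1 / ((n + n : ℕ) : ℝ)) * Real.log (ZSym β J11 J12 n))
        atTop (nhds (Real.log 2))) ∧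
    (2 / (β * (J11 - J12)) < 1 →
      ∀ xt : ℝ, xt ∈ Set.Ioo (0 : ℝ) 1 →
        xt = Real.tanh (β * (J11 - J12) / 2 * xt) →
        (∀ y ∈ Set.Ioo (0 : ℝ) 1, y = Real.tanh (β * (J11 - J12) / 2 * y) → y = xt) →
        Tendsto (fun n : ℕ => (1 / ((n + n : ℕ) : ℝ)) * Real.log (ZSym β J11 J12 n))
          atTop (nhds (Real.log 2 + fSym β J11 J12 (xt, -xt)))) := by
  have hscale : 0 < β * (J11 - J12) := mul_pos hβ (by linarith)
  have hmem (x : ℝ) (hx : x ∈ Set.Icc (-1) 1) : (x, -x) ∈ Set.Icc (-1) 1 ×ˢ Set.Icc (-1) 1 :=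
    ⟨hx, by constructor <;> linarith [hx.1, hx.2]⟩
  refine ⟨fun ht => ?_, fun ht xt _ _ huniq => ?_⟩
  · have hc : β * (J11 - J12) / 4 ≤ 1 / 2 := by
      rw [le_div_iff₀ hscale] at ht; linarith
    have := tendsto_pressure_of_isMaxOn (hmem 0 (by norm_num))
      (isMaxOn_fSym_of_isMaxOn_cwPressure hβ.le hJ12.le (isMaxOn_cwPressure_zero hc))
    rwa [fSym_apply_neg, cwPressure_zero, add_zero] at this
  · have hc : 1 / 2 < β * (J11 - J12) / 4 := by
      rw [div_lt_one hscale] at ht; linarith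
    obtain ⟨x, hx, hmax, hxfix⟩ := exists_isMaxOn_cwPressure hc
    obtain rfl : x = xt := huniq x hx (by convert hxfix using 3; ring)
    exact tendsto_pressure_of_isMaxOn (hmem x ⟨by linarith [hx.1], hx.2.le⟩)
      (isMaxOn_fSym_of_isMaxOn_cwPressure hβ.le hJ12.le hmax)
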